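/- arXiv:1011.3836 — 3 statements merged into one kernel-verified Lean document; each statement's English description precedes it below -/
import Mathlib

section
/- Let X be a proper metric space (i.e. every closed ball of X is compact), let K ⊆ X be a nonempty closed connected subset, let x ∈ K, and let D be a nonnegative real number with D ≤ diam(K), the diameter being taken in [0,∞]. Then there exists a compact connected subset K(D) ⊆ K containing x whose diameter is exactly D. (This is Lemma 7.1 of the paper, which states it for ℝⁿ equipped with any distance inducing the standard topology; properness of the metric is the hypothesis needed to make the statement precise.) -/
/-!
Among the compact connected subsets of `K` that contain `x` and have diameter at most `D`, Zorn's
lemma gives a maximal one `M` (the closure of the union of a chain is again such a set, by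
properness). If `diam M < D`, let `A` be the part of `K` in a closed `ε`-neighbourhood of `M`
with `diam M + 2ε ≤ D`. The component of `x` in the compact set `A` has diameter at most `D`, so
it is `M` by maximality. Boundary bumping then forces `A = K`: otherwise a clopen piece of `A`
around `M`, lying inside the open `ε`-neighbourhood, would be clopen in the connected set `K`.
Hence `M` is the whole of `K`, whose diameter is at least `D`.
-/

open Set Metric
open scoped ENNReal

theorem exists_isClopen_mem_subset_of_connectedComponent_subset {Y : Type*} [TopologicalSpace Y]
    [CompactSpace Y] [T2Space Y] {x : Y} {O : Set Y} (hO : IsOpen O)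
    (h : connectedComponent x ⊆ O) : ∃ U, IsClopen U ∧ x ∈ U ∧ U ⊆ O := by
  let N := {s : Set Y // IsClopen s ∧ x ∈ s}
  have : Nonempty N := ⟨⟨univ, isClopen_univ, mem_univ x⟩⟩
  have hdir : Directed (· ⊇ ·) fun s : N => s.val := by
    rintro ⟨s, hs, hxs⟩ ⟨t, ht, hxt⟩
    exact ⟨⟨s ∩ t, hs.inter ht, hxs, hxt⟩, inter_subset_left, inter_subset_right⟩
  obtain ⟨s, hs⟩ := exists_subset_nhds_of_compactSpace hdir (fun s => s.2.1.isClosed)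
    fun y hy => hO.mem_nhds (h (by rwa [connectedComponent_eq_iInter_isClopen]))
  exact ⟨s, s.2.1, s.2.2, hs⟩

/-- Boundary bumping: a component of a compact subset `A` of a preconnected set `K` cannot have a
neighbourhood inside the relative interior of `A`, unless `A = K`. -/
theorem IsPreconnected.eq_of_connectedComponentIn_subset {X : Type*} [TopologicalSpace X]
    [T2Space X] {K A O : Set X} {x : X} (hK : IsPreconnected K) (hA : IsCompact A)
    (hAK : A ⊆ K) (hx : x ∈ A) (hO : IsOpen O) (hCO : _root_.connectedComponentIn A x ⊆ O)
    (hOA : K ∩ O ⊆ A) :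
    A = K := by
  have : CompactSpace A := isCompact_iff_compactSpace.mp hA
  rw [connectedComponentIn_eq_image hx, image_subset_iff] at hCO
  obtain ⟨U, hU, hxU, hUO⟩ :=
    exists_isClopen_mem_subset_of_connectedComponent_subset (hO.preimage continuous_subtype_val) hCO
  obtain ⟨V, hV, rfl⟩ := isOpen_induced_iff.mp hU.isOpen
  have hAV : IsClosed (A ∩ V) := by
    rw [← Subtype.image_preimage_coe]
    exact (hU.isClosed.isCompact.image continuous_subtype_val).isClosed
  have hAVO : A ∩ V ⊆ O := fun z hz => @hUO ⟨z, hz.1⟩ hz.2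
  refine hAK.antisymm fun y hyK => by_contra fun hyA => ?_
  have hcover : K ⊆ (V ∩ O) ∪ (A ∩ V)ᶜ := fun z _ =>
    or_not_of_imp fun hz => ⟨hz.2, hAVO hz⟩
  obtain ⟨z, hzK, ⟨hzV, hzO⟩, hz⟩ := hK _ _ (hV.inter hO) hAV.isOpen_compl hcover
    ⟨x, hAK hx, hxU, hUO hxU⟩ ⟨y, hyK, fun h => hyA h.1⟩
  exact hz ⟨hOA ⟨hzK, hzO⟩, hzV⟩

theorem IsClosed.connectedComponentIn {X : Type*} [TopologicalSpace X] {F : Set X}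
    (hF : IsClosed F) (x : X) : IsClosed (connectedComponentIn F x) := by
  refine closure_subset_iff_isClosed.mp fun y hy => ?_
  have hx : x ∈ F := connectedComponentIn_nonempty_iff.mp (closure_nonempty_iff.mp ⟨y, hy⟩)
  exact isPreconnected_connectedComponentIn.closure.subset_connectedComponentIn
    (subset_closure (mem_connectedComponentIn hx))
    (closure_minimal (connectedComponentIn_subset F x) hF) hy

theorem Metric.ediam_sUnion_le_of_isChain {X : Type*} [PseudoEMetricSpace X]
    {c : Set (Set X)} (hc : IsChain (· ⊆ ·) c) {r : ℝ≥0∞} (h : ∀ s ∈ c, ediam s ≤ r) :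
    ediam (⋃₀ c) ≤ r := by
  refine ediam_le ?_
  rintro y ⟨s, hs, hys⟩ z ⟨t, ht, hzt⟩
  rcases hc.total hs ht with hst | hts
  · exact (edist_le_ediam_of_mem (hst hys) hzt).trans (h t ht)
  · exact (edist_le_ediam_of_mem hys (hts hzt)).trans (h s hs)

section ProperSpace

variable {X : Type*} [MetricSpace X] [ProperSpace X] {K : Set X} {x : X} {r : ℝ≥0∞}

variable (K x r) in
def subcontinuaDiamLE : Set (Set X) :=
  {C | C ⊆ K ∧ IsCompact C ∧ IsPreconnected C ∧ x ∈ C ∧ ediam C ≤ r}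

theorem exists_maximal_subcontinuaDiamLE (hK : IsClosed K) (hx : x ∈ K) (hr : r ≠ ∞) :
    ∃ M, Maximal (· ∈ subcontinuaDiamLE K x r) M := by
  refine (zorn_subset_nonempty (subcontinuaDiamLE K x r) (fun c hcF hc hne => ?_) {x}
    ⟨singleton_subset_iff.mpr hx, isCompact_singleton, isPreconnected_singleton, rfl,
      ediam_singleton.trans_le bot_le⟩).imp fun M hM => hM.2
  obtain ⟨s, hs⟩ := hne
  have hcr : ediam (⋃₀ c) ≤ r := ediam_sUnion_le_of_isChain hc fun t ht => (hcF ht).2.2.2.2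
  refine ⟨closure (⋃₀ c), ⟨closure_minimal (sUnion_subset fun t ht => (hcF ht).1) hK, ?_,
    (isPreconnected_sUnion x c (fun t ht => (hcF ht).2.2.2.1)
      fun t ht => (hcF ht).2.2.1).closure,
    subset_closure ⟨s, hs, (hcF hs).2.2.2.1⟩, (ediam_closure _).trans_le hcr⟩,
    fun t ht => (subset_sUnion_of_mem ht).trans subset_closure⟩
  exact isCompact_of_isClosed_isBounded isClosed_closure
    (isBounded_iff_ediam_ne_top.mpr (ne_top_of_le_ne_top hr hcr)).closure

theorem Maximal.ediam_eq_of_subcontinuaDiamLE (hK : IsPreconnected K) (hKcl : IsClosed K)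
    (hr : r ≤ ediam K) {M : Set X}
    (hM : Maximal (· ∈ subcontinuaDiamLE K x r) M) :
    ediam M = r := by
  obtain ⟨hMK, hMc, hMp, hxM, hMr⟩ := hM.prop
  refine hMr.antisymm (not_lt.mp fun hlt => ?_)
  obtain ⟨δ, hδ, hδr⟩ := ENNReal.lt_iff_exists_add_pos_lt.mp hlt
  set ε := δ / 2
  have hε : 0 < (ε : ℝ) := by positivity
  set A := K ∩ cthickening ε M
  have hMA : M ⊆ A := subset_inter hMK (self_subset_cthickening M)
  have hA : IsCompact A := hMc.cthickening.inter_left hKcl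
  have hAr : ediam A ≤ r := calc
    ediam A ≤ ediam M + 2 * ε := (ediam_mono inter_subset_right).trans (ediam_cthickening_le ε)
    _ = ediam M + δ := by
      rw [← ENNReal.coe_ofNat, ← ENNReal.coe_mul, mul_div_cancel₀ δ two_ne_zero]
    _ ≤ r := hδr.le
  have hCM : connectedComponentIn A x = M := (hM.eq_of_subset ⟨
    (connectedComponentIn_subset A x).trans inter_subset_left,
    hA.of_isClosed_subset (hA.isClosed.connectedComponentIn x) (connectedComponentIn_subset A x),
    isPreconnected_connectedComponentIn, mem_connectedComponentIn (hMA hxM),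
    (ediam_mono (connectedComponentIn_subset A x)).trans hAr⟩
    (hMp.subset_connectedComponentIn hxM hMA)).symm
  have hAK : A = K := hK.eq_of_connectedComponentIn_subset hA inter_subset_left (hMA hxM)
    isOpen_thickening (hCM ▸ self_subset_thickening hε M)
    (inter_subset_inter_right K (thickening_subset_cthickening ε M))
  rw [hAK, hK.connectedComponentIn (hMK hxM)] at hCM
  exact (hr.trans_lt (hCM ▸ hlt)).false

end ProperSpace

theorem stmt_0_general {X : Type*} [MetricSpace X] [ProperSpace X]
    {K : Set X} (hKcl : IsClosed K) (hKconn : IsConnected K)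
    {x : X} (hx : x ∈ K) {D : ℝ}
    (hdiam : ENNReal.ofReal D ≤ EMetric.diam K) :
    ∃ K' : Set X, K' ⊆ K ∧ IsCompact K' ∧ IsConnected K' ∧ x ∈ K' ∧
      EMetric.diam K' = ENNReal.ofReal D := by
  obtain ⟨M, hM⟩ := exists_maximal_subcontinuaDiamLE hKcl hx ENNReal.ofReal_ne_top
  obtain ⟨hMK, hMc, hMp, hxM, -⟩ := hM.prop
  exact ⟨M, hMK, hMc, ⟨⟨x, hxM⟩, hMp⟩, hxM,
    hM.ediam_eq_of_subcontinuaDiamLE hKconn.isPreconnected hKcl hdiam⟩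

/-- Lemma 7.1 of the paper: in a proper metric space, any nonempty closed connected
set `K`, any point `x ∈ K` and any nonnegative real `D` not exceeding the diameter
of `K` (taken in `[0,∞]`) admit a compact connected subset `K' ⊆ K` containing `x`
whose diameter is exactly `D`. -/
theorem stmt_0 {X : Type*} [MetricSpace X] [ProperSpace X]
    {K : Set X} (hKne : K.Nonempty) (hKcl : IsClosed K) (hKconn : IsConnected K)
    {x : X} (hx : x ∈ K) {D : ℝ} (hD : 0 ≤ D)
    (hdiam : ENNReal.ofReal D ≤ EMetric.diam K) :
    ∃ K' : Set X, K' ⊆ K ∧ IsCompact K' ∧ IsConnected K' ∧ x ∈ K' ∧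
      EMetric.diam K' = ENNReal.ofReal D :=
  stmt_0_general hKcl hKconn hx hdiam
end

section
/- Fix integers d, ℓ ≥ 1 and α ∈ (0,1]. For every ε > 0 there exists δ > 0 with the following property: for every C¹ map v₀ : ℝ^d → ℝ^ℓ whose derivative Dv₀ is α-Hölder, and for all real numbers D̂ > 2D > 0, if the C^{1+α}-size of v₀ is at most δ and D̂^{-(1+α)} · sup_{y ∈ B(0,D̂)} ‖v₀(y)‖ ≤ δ, then there exists a C¹ map v : ℝ^d → ℝ^ℓ with α-Hölder derivative which coincides with v₀ on the ball B(0,D), vanishes outside the ball B(0,D̂), and whose C^{1+α}-size is at most ε. (Lemma 6.1 of the paper, the elementary C^{1+α}-perturbation lemma.) -/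
/-!
Take `v = χ • v₀` with `χ(x) = φ(x / D̂)` for a fixed bump `φ` equal to `1` on the ball of radius
`1/2` and vanishing outside the ball of radius `3/4`, so that `‖Dχ‖ ≲ D̂⁻¹` and `Lip(Dχ) ≲ D̂⁻²`.
On the ball of radius `7/8 D̂`, the bound `sup ‖v₀‖ ≤ δ D̂^{1+α}` together with
`Höl_α(Dv₀) ≤ δ` forces `‖Dv₀‖ ≲ δ D̂^α`: a map that is small on a ball and whose derivative
varies little there has a small derivative. Every power of `D̂` then cancels in the Leibniz rule
`D(χ • v₀) = χ • Dv₀ + Dχ ⊗ v₀`, so `Höl_α(Dv) ≲ δ` on that ball, hence everywhere because `v`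
vanishes outside the ball of radius `3/4 D̂`.
-/

open Metric NNReal Set

theorem holderWith_of_dist_le {X Y : Type*} [PseudoMetricSpace X] [PseudoMetricSpace Y]
    {C : ℝ} {r : ℝ≥0} {f : X → Y} (h : ∀ x y, dist (f x) (f y) ≤ C * dist x y ^ (r : ℝ)) :
    HolderWith C.toNNReal r f := by
  intro x y
  rw [edist_dist, edist_dist, ← ENNReal.ofReal_coe_nnreal,
    ENNReal.ofReal_rpow_of_nonneg dist_nonneg r.coe_nonneg,
    ← ENNReal.ofReal_mul (by positivity)]
  exact ENNReal.ofReal_le_ofReal <| (h x y).trans <|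
    mul_le_mul_of_nonneg_right (Real.le_coe_toNNReal C) (by positivity)

theorem mul_rpow_le_mul_rpow_of_le {t R α : ℝ} (ht : 0 ≤ t) (htR : t ≤ R) (hR : 0 < R)
    (hα : α ≤ 1) : t * R ^ α ≤ R * t ^ α := by
  have := Real.self_le_rpow_of_le_one (div_nonneg ht hR.le) ((div_le_one hR).2 htR) hα
  rw [Real.div_rpow ht hR.le, div_le_div_iff₀ hR (by positivity)] at this
  linarith

theorem norm_sub_le_rpow_of_lipschitzOn {E F : Type*} [NormedAddCommGroup E]
    [NormedAddCommGroup F] {f : E → F} {s : Set E} {L R α : ℝ} (hR : 0 < R) (hα0 : 0 ≤ α)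
    (hα1 : α ≤ 1) (hL : 0 ≤ L) (hs : s ⊆ closedBall (0 : E) R)
    (hf : ∀ x ∈ s, ∀ y ∈ s, ‖f x - f y‖ ≤ L * ‖x - y‖) :
    ∀ x ∈ s, ∀ y ∈ s, ‖f x - f y‖ ≤ L * (2 * R / R ^ α) * ‖x - y‖ ^ α := by
  intro x hx y hy
  have h2R : ‖x - y‖ ≤ 2 * R := by
    linarith [norm_sub_le x y, mem_closedBall_zero_iff.1 (hs hx), mem_closedBall_zero_iff.1 (hs hy)]
  have key : ‖x - y‖ * R ^ α ≤ 2 * R * ‖x - y‖ ^ α :=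
    calc ‖x - y‖ * R ^ α ≤ ‖x - y‖ * (2 * R) ^ α := by gcongr; linarith
      _ ≤ 2 * R * ‖x - y‖ ^ α := mul_rpow_le_mul_rpow_of_le (norm_nonneg _) h2R (by positivity) hα1
  refine (hf x hx y hy).trans ?_
  rw [mul_assoc L]
  gcongr
  rwa [div_mul_eq_mul_div, le_div_iff₀ (by positivity)]

theorem ContinuousLinearMap.norm_map₂_sub_map₂_le_of_holderOn {𝕜 E F G H : Type*}
    [NontriviallyNormedField 𝕜] [NormedAddCommGroup E] [NormedAddCommGroup F]
    [NormedSpace 𝕜 F] [NormedAddCommGroup G] [NormedSpace 𝕜 G] [NormedAddCommGroup H]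
    [NormedSpace 𝕜 H] (B : F →L[𝕜] G →L[𝕜] H) (hB : ‖B‖ ≤ 1)
    {f : E → F} {g : E → G} {s : Set E} {α M₁ M₂ H₁ H₂ : ℝ}
    (hf : ∀ x ∈ s, ‖f x‖ ≤ M₁) (hg : ∀ x ∈ s, ‖g x‖ ≤ M₂)
    (hHf : ∀ x ∈ s, ∀ y ∈ s, ‖f x - f y‖ ≤ H₁ * ‖x - y‖ ^ α)
    (hHg : ∀ x ∈ s, ∀ y ∈ s, ‖g x - g y‖ ≤ H₂ * ‖x - y‖ ^ α) :
    ∀ x ∈ s, ∀ y ∈ s,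
      ‖B (f x) (g x) - B (f y) (g y)‖ ≤ (M₁ * H₂ + H₁ * M₂) * ‖x - y‖ ^ α := by
  intro x hx y hy
  have hsplit : B (f x) (g x) - B (f y) (g y) = B (f x) (g x - g y) + B (f x - f y) (g y) := by
    simp only [map_sub, sub_apply]; abel
  have hM₁ : 0 ≤ M₁ := (norm_nonneg _).trans (hf x hx)
  have hM₂ : 0 ≤ M₂ := (norm_nonneg _).trans (hg y hy)
  calc ‖B (f x) (g x) - B (f y) (g y)‖
      ≤ ‖B‖ * (‖f x‖ * ‖g x - g y‖ + ‖f x - f y‖ * ‖g y‖) := by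
        rw [hsplit, mul_add, ← mul_assoc, ← mul_assoc]
        exact (norm_add_le _ _).trans (add_le_add (B.le_opNorm₂ _ _) (B.le_opNorm₂ _ _))
    _ ≤ ‖f x‖ * ‖g x - g y‖ + ‖f x - f y‖ * ‖g y‖ :=
        mul_le_of_le_one_left (by positivity) hB
    _ ≤ M₁ * (H₂ * ‖x - y‖ ^ α) + H₁ * ‖x - y‖ ^ α * M₂ := by
        gcongr
        exacts [hf x hx, hHg x hx y hy, (norm_nonneg _).trans (hHf x hx y hy), hHf x hx y hy,
          hg y hy]
    _ = (M₁ * H₂ + H₁ * M₂) * ‖x - y‖ ^ α := by ring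

theorem norm_sub_le_rpow_of_holderOn_closedBall {E F : Type*} [NormedAddCommGroup E]
    [NormedSpace ℝ E] [NormedAddCommGroup F] {h : E → F} {r R C α : ℝ} (hα : 0 ≤ α)
    (hC : 0 ≤ C) (hrR : r < R) (hzero : ∀ x, r < ‖x‖ → h x = 0)
    (hloc : ∀ x ∈ closedBall (0 : E) R, ∀ y ∈ closedBall (0 : E) R,
      ‖h x - h y‖ ≤ C * ‖x - y‖ ^ α) (x y : E) :
    ‖h x - h y‖ ≤ C * ‖x - y‖ ^ α := by
  -- if `x` lies outside the large ball, replace it by the point `z` where the segment from `y`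
  -- to `x` leaves that ball: `h z = h x = 0` and `z` is closer to `y`
  have outside : ∀ a b : E, R < ‖a‖ → ‖h a - h b‖ ≤ C * ‖a - b‖ ^ α := by
    intro a b ha
    rcases lt_or_ge r ‖b‖ with hb | hb
    · rw [hzero a (hrR.trans ha), hzero b hb, sub_self, norm_zero]
      positivity
    obtain ⟨s, hs, hsR⟩ : ∃ s ∈ Icc (0 : ℝ) 1, ‖b + s • (a - b)‖ = R :=
      intermediate_value_Icc zero_le_one (by fun_prop) ⟨by simpa using hb.trans hrR.le,
        by simpa using ha.le⟩
    set z := b + s • (a - b)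
    calc ‖h a - h b‖ = ‖h z - h b‖ := by
          rw [hzero a (hrR.trans ha), hzero z (by rw [hsR]; exact hrR)]
      _ ≤ C * ‖z - b‖ ^ α := hloc z (by simp [hsR]) b (by simpa using hb.trans hrR.le)
      _ ≤ C * ‖a - b‖ ^ α := by
          rw [add_sub_cancel_left, norm_smul, Real.norm_eq_abs, abs_of_nonneg hs.1]
          gcongr
          exacts [mul_nonneg hs.1 (norm_nonneg _), mul_le_of_le_one_left (norm_nonneg _) hs.2]
  by_cases hx : R < ‖x‖
  · exact outside x y hx
  by_cases hy : R < ‖y‖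
  · rw [norm_sub_rev, norm_sub_rev x]
    exact outside y x hy
  exact hloc x (by simpa using not_lt.1 hx) y (by simpa using not_lt.1 hy)

theorem fderiv_eq_zero_of_forall_lt_norm {𝕜 E F : Type*} [NontriviallyNormedField 𝕜]
    [NormedAddCommGroup E] [NormedSpace 𝕜 E] [NormedAddCommGroup F] [NormedSpace 𝕜 F]
    {v : E → F} {r : ℝ} (hv : ∀ x, r < ‖x‖ → v x = 0) {x : E} (hx : r < ‖x‖) :
    fderiv 𝕜 v x = 0 := by
  have : v =ᶠ[nhds x] fun _ => 0 :=
    Filter.eventually_of_mem ((isOpen_lt continuous_const continuous_norm).mem_nhds hx) hv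
  rw [this.fderiv_eq, fderiv_const_apply]

noncomputable section Cutoff

variable {E : Type*} [NormedAddCommGroup E] [NormedSpace ℝ E] [HasContDiffBump E]

variable (E) in
def unitBump : ContDiffBump (0 : E) := ⟨1 / 2, 3 / 4, by norm_num, by norm_num⟩

def cutoff (R : ℝ) (x : E) : ℝ := unitBump E (R⁻¹ • x)

theorem norm_cutoff_le_one (R : ℝ) (x : E) : ‖cutoff R x‖ ≤ 1 := by
  rw [cutoff, Real.norm_eq_abs, abs_of_nonneg (unitBump E).nonneg]
  exact (unitBump E).le_one

theorem contDiff_cutoff {n : ℕ∞} (R : ℝ) : ContDiff ℝ n (cutoff R : E → ℝ) :=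
  (unitBump E).contDiff.comp (contDiff_const_smul R⁻¹)

theorem cutoff_eq_one {R : ℝ} (hR : 0 < R) {x : E} (hx : ‖x‖ ≤ R / 2) : cutoff R x = 1 := by
  refine (unitBump E).one_of_mem_closedBall ?_
  rw [mem_closedBall_zero_iff, norm_smul, Real.norm_eq_abs, abs_inv, abs_of_pos hR,
    inv_mul_le_iff₀ hR]
  exact hx.trans_eq (by simp [unitBump]; ring)

theorem cutoff_eq_zero {R : ℝ} (hR : 0 < R) {x : E} (hx : 3 / 4 * R < ‖x‖) :
    cutoff R x = 0 := by
  refine (unitBump E).zero_of_le_dist ?_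
  rw [dist_zero_right, norm_smul, Real.norm_eq_abs, abs_inv, abs_of_pos hR,
    le_inv_mul_iff₀ hR]
  exact le_of_lt (by simpa [unitBump, mul_comm] using hx)

theorem fderiv_cutoff (R : ℝ) (x : E) :
    fderiv ℝ (cutoff R) x = R⁻¹ • fderiv ℝ (unitBump E) (R⁻¹ • x) :=
  fderiv_comp_smul _

theorem exists_norm_fderiv_cutoff_le [FiniteDimensional ℝ E] :
    ∃ K : ℝ, 0 ≤ K ∧ ∀ R : ℝ, 0 < R → ∀ x y : E, ‖fderiv ℝ (cutoff R) x‖ ≤ K / R ∧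
      ‖fderiv ℝ (cutoff R) x - fderiv ℝ (cutoff R) y‖ ≤ K / R ^ 2 * ‖x - y‖ := by
  have hsupp : HasCompactSupport (fderiv ℝ (unitBump E)) :=
    (unitBump E).hasCompactSupport.fderiv ℝ
  have hsmooth : ContDiff ℝ 1 (fderiv ℝ (unitBump E)) :=
    ((unitBump E).contDiff (n := 2)).fderiv_right (m := 1) (by norm_num)
  obtain ⟨K₁, hK₁⟩ := hsupp.exists_bound_of_continuous hsmooth.continuous
  obtain ⟨K₂, hK₂⟩ := hsmooth.lipschitzWith_of_hasCompactSupport hsupp one_ne_zero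
  refine ⟨max K₁ K₂, le_max_of_le_right K₂.coe_nonneg, fun R hR x y => ⟨?_, ?_⟩⟩
  · rw [fderiv_cutoff, norm_smul, norm_inv, Real.norm_eq_abs, abs_of_pos hR, inv_mul_eq_div]
    gcongr
    exact (hK₁ _).trans (le_max_left _ _)
  · rw [fderiv_cutoff, fderiv_cutoff, ← smul_sub, norm_smul, norm_inv, Real.norm_eq_abs,
      abs_of_pos hR]
    calc R⁻¹ * ‖fderiv ℝ (unitBump E) (R⁻¹ • x) - fderiv ℝ (unitBump E) (R⁻¹ • y)‖
        ≤ R⁻¹ * (K₂ * ‖R⁻¹ • x - R⁻¹ • y‖) := by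
          gcongr; exact hK₂.norm_sub_le _ _
      _ ≤ R⁻¹ * (max K₁ K₂ * (R⁻¹ * ‖x - y‖)) := by
          rw [← smul_sub, norm_smul, norm_inv, Real.norm_eq_abs, abs_of_pos hR]
          gcongr; exact le_max_right _ _
      _ = max K₁ K₂ / R ^ 2 * ‖x - y‖ := by field_simp

end Cutoff

section Estimates

variable {E F : Type*} [NormedAddCommGroup E] [NormedSpace ℝ E]
  [NormedAddCommGroup F] [NormedSpace ℝ F]

theorem norm_fderiv_le_of_norm_le_of_norm_fderiv_sub_le {v : E → F} {x : E} {t M K : ℝ}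
    (ht : 0 < t) (hv : ∀ y ∈ closedBall x t, DifferentiableAt ℝ v y)
    (hM : ∀ y ∈ closedBall x t, ‖v y‖ ≤ M)
    (hK : ∀ y ∈ closedBall x t, ‖fderiv ℝ v y - fderiv ℝ v x‖ ≤ K) :
    ‖fderiv ℝ v x‖ ≤ 2 * M / t + K := by
  have hx : x ∈ closedBall x t := mem_closedBall_self ht.le
  have hK0 : 0 ≤ K := (norm_nonneg _).trans (hK x hx)
  have hM0 : 0 ≤ M := (norm_nonneg _).trans (hM x hx)
  refine ContinuousLinearMap.opNorm_le_of_unit_norm (by positivity) fun u hu => ?_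
  have hy : x + t • u ∈ closedBall x t := by
    simp [norm_smul, hu, abs_of_pos ht]
  have hmvt := (convex_closedBall x t).norm_image_sub_le_of_norm_fderiv_le' hv hK hx hy
  rw [add_sub_cancel_left, norm_smul, Real.norm_eq_abs, abs_of_pos ht, hu, mul_one,
    map_smul] at hmvt
  have : t * ‖fderiv ℝ v x u‖ ≤ t * (2 * M / t + K) := by
    calc t * ‖fderiv ℝ v x u‖ = ‖t • fderiv ℝ v x u‖ := by
          rw [norm_smul, Real.norm_eq_abs, abs_of_pos ht]
      _ = ‖(v (x + t • u) - v x) - (v (x + t • u) - v x - t • fderiv ℝ v x u)‖ := by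
          rw [sub_sub_cancel]
      _ ≤ ‖v (x + t • u)‖ + ‖v x‖ + K * t :=
          (norm_sub_le _ _).trans (add_le_add (norm_sub_le _ _) hmvt)
      _ ≤ t * (2 * M / t + K) := by
          rw [mul_add, mul_div_cancel₀ _ ht.ne']
          linarith [hM _ hy, hM x hx]
  exact le_of_mul_le_mul_left this ht

theorem norm_fderiv_le_of_holder_of_norm_le_on_closedBall {v : E → F} {R δ α : ℝ}
    (hv : Differentiable ℝ v) (hR : 0 < R) (hδ : 0 ≤ δ) (hα : 0 ≤ α)
    (hHol : ∀ a b, ‖fderiv ℝ v a - fderiv ℝ v b‖ ≤ δ * ‖a - b‖ ^ α)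
    (hsup : ∀ y ∈ closedBall (0 : E) R, ‖v y‖ ≤ δ * R ^ (1 + α))
    {x : E} (hx : x ∈ closedBall (0 : E) (7 / 8 * R)) :
    ‖fderiv ℝ v x‖ ≤ 17 * δ * R ^ α := by
  have hball : closedBall x (R / 8) ⊆ closedBall 0 R := by
    refine closedBall_subset_closedBall' ?_
    rw [mem_closedBall_zero_iff] at hx
    rw [dist_zero_right]; linarith
  have hK : ∀ y ∈ closedBall x (R / 8), ‖fderiv ℝ v y - fderiv ℝ v x‖ ≤ δ * R ^ α := by
    intro y hy
    refine (hHol y x).trans (mul_le_mul_of_nonneg_left ?_ hδ)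
    rw [← dist_eq_norm]
    exact Real.rpow_le_rpow dist_nonneg ((mem_closedBall.1 hy).trans (by linarith)) hα
  calc ‖fderiv ℝ v x‖ ≤ 2 * (δ * R ^ (1 + α)) / (R / 8) + δ * R ^ α :=
        norm_fderiv_le_of_norm_le_of_norm_fderiv_sub_le (by positivity)
          (fun y _ => hv y) (fun y hy => hsup y (hball hy)) hK
    _ = 17 * δ * R ^ α := by
        rw [Real.rpow_add hR, Real.rpow_one]; field_simp; ring

theorem norm_fderiv_smul_le {χ : E → ℝ} {v : E → F} {x : E} {R δ K α : ℝ}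
    (hχ : DifferentiableAt ℝ χ x) (hv : DifferentiableAt ℝ v x) (hR : 0 < R) (hα : 0 ≤ α)
    (hχ1 : ‖χ x‖ ≤ 1) (hDχ : ‖fderiv ℝ χ x‖ ≤ K / R) (hDv : ‖fderiv ℝ v x‖ ≤ δ)
    (hv₁ : ‖v x‖ ≤ δ) (hv₂ : ‖v x‖ ≤ δ * R ^ (1 + α)) :
    ‖fderiv ℝ (fun z => χ z • v z) x‖ ≤ (1 + K) * δ := by
  have hδ : 0 ≤ δ := (norm_nonneg _).trans hv₁
  have hvR : ‖v x‖ ≤ δ * R := by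
    rcases le_total 1 R with h | h
    · exact hv₁.trans (le_mul_of_one_le_right hδ h)
    · refine hv₂.trans (mul_le_mul_of_nonneg_left ?_ hδ)
      simpa using Real.rpow_le_rpow_of_exponent_ge hR h (by linarith : (1 : ℝ) ≤ 1 + α)
  rw [fderiv_fun_smul hχ hv]
  calc _ ≤ ‖χ x‖ * ‖fderiv ℝ v x‖ + ‖fderiv ℝ χ x‖ * ‖v x‖ := by
        rw [← ContinuousLinearMap.norm_smulRight_apply]
        exact (norm_add_le _ _).trans (add_le_add (ContinuousLinearMap.opNorm_smul_le _ _) le_rfl)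
    _ ≤ 1 * δ + K / R * (δ * R) := by gcongr; exact (norm_nonneg _).trans hDχ
    _ = (1 + K) * δ := by field_simp

theorem norm_fderiv_smul_sub_le {χ : E → ℝ} {v : E → F} {s : Set E}
    {α M₀ M₁ N₀ N₁ H₀ H₁ G₀ G₁ : ℝ}
    (hχ : ∀ x ∈ s, DifferentiableAt ℝ χ x) (hv : ∀ x ∈ s, DifferentiableAt ℝ v x)
    (hχ₀ : ∀ x ∈ s, ‖χ x‖ ≤ M₀) (hχ₁ : ∀ x ∈ s, ‖fderiv ℝ χ x‖ ≤ M₁)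
    (hv₀ : ∀ x ∈ s, ‖v x‖ ≤ N₀) (hv₁ : ∀ x ∈ s, ‖fderiv ℝ v x‖ ≤ N₁)
    (hHχ₀ : ∀ x ∈ s, ∀ y ∈ s, ‖χ x - χ y‖ ≤ H₀ * ‖x - y‖ ^ α)
    (hHχ₁ : ∀ x ∈ s, ∀ y ∈ s, ‖fderiv ℝ χ x - fderiv ℝ χ y‖ ≤ H₁ * ‖x - y‖ ^ α)
    (hHv₀ : ∀ x ∈ s, ∀ y ∈ s, ‖v x - v y‖ ≤ G₀ * ‖x - y‖ ^ α)
    (hHv₁ : ∀ x ∈ s, ∀ y ∈ s, ‖fderiv ℝ v x - fderiv ℝ v y‖ ≤ G₁ * ‖x - y‖ ^ α) :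
    ∀ x ∈ s, ∀ y ∈ s,
      ‖fderiv ℝ (fun z => χ z • v z) x - fderiv ℝ (fun z => χ z • v z) y‖ ≤
        (M₀ * G₁ + H₀ * N₁ + (M₁ * G₀ + H₁ * N₀)) * ‖x - y‖ ^ α := by
  intro x hx y hy
  rw [fderiv_fun_smul (hχ x hx) (hv x hx), fderiv_fun_smul (hχ y hy) (hv y hy),
    add_sub_add_comm, add_mul]
  exact (norm_add_le _ _).trans (add_le_add
    ((ContinuousLinearMap.lsmul ℝ ℝ).norm_map₂_sub_map₂_le_of_holderOn
      ContinuousLinearMap.opNorm_lsmul_le hχ₀ hv₁ hHχ₀ hHv₁ x hx y hy)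
    ((ContinuousLinearMap.smulRightL ℝ E F).norm_map₂_sub_map₂_le_of_holderOn
      ContinuousLinearMap.norm_smulRightL_le hχ₁ hv₀ hHχ₁ hHv₀ x hx y hy))

theorem norm_fderiv_smul_sub_le_on_closedBall {χ : E → ℝ} {v : E → F} {R δ K α : ℝ}
    (hχ : Differentiable ℝ χ) (hv : Differentiable ℝ v) (hR : 0 < R) (hδ : 0 ≤ δ)
    (hα0 : 0 ≤ α) (hα1 : α ≤ 1) (hχ1 : ∀ x, ‖χ x‖ ≤ 1) (hDχ : ∀ x, ‖fderiv ℝ χ x‖ ≤ K / R)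
    (hDχlip : ∀ x y, ‖fderiv ℝ χ x - fderiv ℝ χ y‖ ≤ K / R ^ 2 * ‖x - y‖)
    (hHol : ∀ a b, ‖fderiv ℝ v a - fderiv ℝ v b‖ ≤ δ * ‖a - b‖ ^ α)
    (hsup : ∀ y ∈ closedBall (0 : E) R, ‖v y‖ ≤ δ * R ^ (1 + α)) :
    ∀ x ∈ closedBall (0 : E) (7 / 8 * R), ∀ y ∈ closedBall (0 : E) (7 / 8 * R),
      ‖fderiv ℝ (fun z => χ z • v z) x - fderiv ℝ (fun z => χ z • v z) y‖ ≤
        (1 + 70 * K) * δ * ‖x - y‖ ^ α := by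
  set B := closedBall (0 : E) (7 / 8 * R)
  set ρ := R ^ α
  have hρ : 0 < ρ := Real.rpow_pos_of_pos hR α
  have hK : 0 ≤ K := by
    have := mul_nonneg ((norm_nonneg _).trans (hDχ 0)) hR.le
    rwa [div_mul_cancel₀ _ hR.ne'] at this
  have hBR : B ⊆ closedBall 0 R := closedBall_subset_closedBall (by linarith)
  have hDv : ∀ x ∈ B, ‖fderiv ℝ v x‖ ≤ 17 * δ * ρ := fun x hx =>
    norm_fderiv_le_of_holder_of_norm_le_on_closedBall hv hR hδ hα0 hHol hsup hx
  have hvlip : ∀ x ∈ B, ∀ y ∈ B, ‖v x - v y‖ ≤ 17 * δ * ρ * ‖x - y‖ := fun x hx y hy =>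
    (convex_closedBall _ _).norm_image_sub_le_of_norm_fderiv_le (fun z _ => hv z) hDv hy hx
  have hχlip : ∀ x y, ‖χ x - χ y‖ ≤ K / R * ‖x - y‖ := fun x y =>
    convex_univ.norm_image_sub_le_of_norm_fderiv_le (fun z _ => hχ z) (fun z _ => hDχ z)
      (mem_univ y) (mem_univ x)
  have hvB : ∀ x ∈ B, ‖v x‖ ≤ δ * R * ρ := fun x hx =>
    (hsup x (hBR hx)).trans_eq (by rw [Real.rpow_add hR, Real.rpow_one]; ring)
  intro x hx y hy
  calc _ ≤ (1 * δ + K / R * (2 * R / ρ) * (17 * δ * ρ)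
          + (K / R * (17 * δ * ρ * (2 * R / ρ)) + K / R ^ 2 * (2 * R / ρ) * (δ * R * ρ)))
          * ‖x - y‖ ^ α :=
        norm_fderiv_smul_sub_le (fun z _ => hχ z) (fun z _ => hv z) (fun z _ => hχ1 z)
          (fun z _ => hDχ z) hvB hDv
          (norm_sub_le_rpow_of_lipschitzOn hR hα0 hα1 (by positivity) hBR fun z _ w _ => hχlip z w)
          (norm_sub_le_rpow_of_lipschitzOn hR hα0 hα1 (by positivity) hBR
            fun z _ w _ => hDχlip z w)
          (norm_sub_le_rpow_of_lipschitzOn hR hα0 hα1 (by positivity) hBR hvlip)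
          (fun z _ w _ => hHol z w) x hx y hy
    _ = (1 + 70 * K) * δ * ‖x - y‖ ^ α := by field_simp; ring

end Estimates

theorem exists_cutoff_smul_perturbation {E F : Type*} [NormedAddCommGroup E] [NormedSpace ℝ E]
    [FiniteDimensional ℝ E] [NormedAddCommGroup F] [NormedSpace ℝ F] (α : ℝ≥0) (hα1 : α ≤ 1) :
    ∀ ε : ℝ, 0 < ε → ∃ δ : ℝ, 0 < δ ∧
      ∀ (v₀ : E → F) (D Dhat : ℝ), 0 < D → 2 * D < Dhat → ContDiff ℝ 1 v₀ →
        (∀ x, ‖v₀ x‖ ≤ δ) → (∀ x, ‖fderiv ℝ v₀ x‖ ≤ δ) →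
        HolderWith δ.toNNReal α (fun x => fderiv ℝ v₀ x) →
        (∀ y ∈ closedBall (0 : E) Dhat, ‖v₀ y‖ ≤ δ * Dhat ^ ((1 : ℝ) + (α : ℝ))) →
        ∃ v : E → F, ContDiff ℝ 1 v ∧ (∀ x ∈ ball (0 : E) D, v x = v₀ x) ∧
          (∀ x ∉ ball (0 : E) Dhat, v x = 0) ∧ (∀ x, ‖v x‖ ≤ ε) ∧
          (∀ x, ‖fderiv ℝ v x‖ ≤ ε) ∧ HolderWith ε.toNNReal α (fun x => fderiv ℝ v x) := by
  obtain ⟨K, hK, hcut⟩ := exists_norm_fderiv_cutoff_le (E := E)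
  intro ε hε
  refine ⟨ε / (1 + 70 * K), by positivity, fun v₀ D R hD hDR hv₀ hsup hDsup hHol hball => ?_⟩
  set δ := ε / (1 + 70 * K)
  have hR : 0 < R := by linarith
  have hδ : 0 ≤ δ := by positivity
  have hδε : (1 + 70 * K) * δ = ε := mul_div_cancel₀ _ (by positivity)
  have hv₀d : Differentiable ℝ v₀ := hv₀.differentiable one_ne_zero
  have hχd : Differentiable ℝ (cutoff R : E → ℝ) :=
    (contDiff_cutoff (n := 1) R).differentiable one_ne_zero
  have hHol' : ∀ a b, ‖fderiv ℝ v₀ a - fderiv ℝ v₀ b‖ ≤ δ * ‖a - b‖ ^ (α : ℝ) := fun a b => by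
    simpa [dist_eq_norm, Real.coe_toNNReal _ hδ] using hHol.dist_le a b
  have hzero : ∀ x : E, 3 / 4 * R < ‖x‖ → cutoff R x • v₀ x = 0 := fun x hx => by
    rw [cutoff_eq_zero hR hx, zero_smul]
  refine ⟨fun x => cutoff R x • v₀ x, (contDiff_cutoff R).smul hv₀, fun x hx => ?_,
    fun x hx => hzero x ?_, fun x => ?_, fun x => ?_, holderWith_of_dist_le fun x y => ?_⟩
  · show cutoff R x • v₀ x = v₀ x
    rw [cutoff_eq_one hR (by linarith [mem_ball_zero_iff.1 hx]), one_smul]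
  · linarith [not_lt.1 (mt mem_ball_zero_iff.2 hx)]
  · calc ‖cutoff R x • v₀ x‖ ≤ 1 * δ :=
          (norm_smul_le _ _).trans (mul_le_mul (norm_cutoff_le_one R x) (hsup x) (norm_nonneg _)
            zero_le_one)
      _ ≤ ε := by rw [← hδε]; gcongr; linarith
  · rcases le_or_gt ‖x‖ (3 / 4 * R) with hx | hx
    · calc _ ≤ (1 + K) * δ := norm_fderiv_smul_le (hχd x) (hv₀d x) hR α.coe_nonneg
            (norm_cutoff_le_one R x) (hcut R hR x x).1 (hDsup x) (hsup x)
            (hball x (mem_closedBall_zero_iff.2 (by linarith)))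
        _ ≤ ε := by rw [← hδε]; gcongr; linarith
    · rw [fderiv_eq_zero_of_forall_lt_norm hzero hx, norm_zero]; exact hε.le
  · rw [dist_eq_norm, dist_eq_norm, ← hδε]
    refine norm_sub_le_rpow_of_holderOn_closedBall α.coe_nonneg (by positivity)
      (by linarith : 3 / 4 * R < 7 / 8 * R) (fun z hz => fderiv_eq_zero_of_forall_lt_norm hzero hz)
      ?_ x y
    exact norm_fderiv_smul_sub_le_on_closedBall hχd hv₀d hR hδ α.coe_nonneg (by exact_mod_cast hα1)
      (norm_cutoff_le_one R) (fun x => (hcut R hR x x).1) (fun x y => (hcut R hR x y).2) hHol' hball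

theorem stmt_1_general (d l : ℕ)
    (α : ℝ≥0) (hα1 : α ≤ 1) :
    ∀ ε : ℝ, 0 < ε → ∃ δ : ℝ, 0 < δ ∧
      ∀ (v₀ : EuclideanSpace ℝ (Fin d) → EuclideanSpace ℝ (Fin l)) (D Dhat : ℝ),
        0 < D → 2 * D < Dhat →
        ContDiff ℝ 1 v₀ →
        -- the `C^{1+α}`-size of `v₀` is at most `δ`:
        (∀ x, ‖v₀ x‖ ≤ δ) →
        (∀ x, ‖fderiv ℝ v₀ x‖ ≤ δ) →
        HolderWith δ.toNNReal α (fun x => fderiv ℝ v₀ x) →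
        -- `Dhat ^ (-(1+α)) * sup_{B(0,Dhat)} ‖v₀‖ ≤ δ`:
        (∀ y ∈ closedBall (0 : EuclideanSpace ℝ (Fin d)) Dhat,
          ‖v₀ y‖ ≤ δ * Dhat ^ ((1 : ℝ) + (α : ℝ))) →
        ∃ v : EuclideanSpace ℝ (Fin d) → EuclideanSpace ℝ (Fin l),
          ContDiff ℝ 1 v ∧
          (∀ x ∈ ball (0 : EuclideanSpace ℝ (Fin d)) D, v x = v₀ x) ∧
          (∀ x ∉ ball (0 : EuclideanSpace ℝ (Fin d)) Dhat, v x = 0) ∧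
          -- the `C^{1+α}`-size of `v` is at most `ε`:
          (∀ x, ‖v x‖ ≤ ε) ∧
          (∀ x, ‖fderiv ℝ v x‖ ≤ ε) ∧
          HolderWith ε.toNNReal α (fun x => fderiv ℝ v x) :=
  exists_cutoff_smul_perturbation α hα1

/-- Lemma 6.1 of the paper (elementary `C^{1+α}`-perturbation lemma).
The `C^{1+α}`-size of a `C¹` map `v` with `α`-Hölder derivative is
`max(sup‖v‖, sup‖Dv‖, Höl_α(Dv))`; "size ≤ c" is encoded by the three bounds
`∀ x, ‖v x‖ ≤ c`, `∀ x, ‖fderiv ℝ v x‖ ≤ c` and `HolderWith c.toNNReal α (fderiv ℝ v)`. -/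
theorem stmt_1 (d l : ℕ) (hd : 1 ≤ d) (hl : 1 ≤ l)
    (α : ℝ≥0) (hα0 : 0 < α) (hα1 : α ≤ 1) :
    ∀ ε : ℝ, 0 < ε → ∃ δ : ℝ, 0 < δ ∧
      ∀ (v₀ : EuclideanSpace ℝ (Fin d) → EuclideanSpace ℝ (Fin l)) (D Dhat : ℝ),
        0 < D → 2 * D < Dhat →
        ContDiff ℝ 1 v₀ →
        -- the `C^{1+α}`-size of `v₀` is at most `δ`:
        (∀ x, ‖v₀ x‖ ≤ δ) →
        (∀ x, ‖fderiv ℝ v₀ x‖ ≤ δ) →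
        HolderWith δ.toNNReal α (fun x => fderiv ℝ v₀ x) →
        -- `Dhat ^ (-(1+α)) * sup_{B(0,Dhat)} ‖v₀‖ ≤ δ`:
        (∀ y ∈ closedBall (0 : EuclideanSpace ℝ (Fin d)) Dhat,
          ‖v₀ y‖ ≤ δ * Dhat ^ ((1 : ℝ) + (α : ℝ))) →
        ∃ v : EuclideanSpace ℝ (Fin d) → EuclideanSpace ℝ (Fin l),
          ContDiff ℝ 1 v ∧
          (∀ x ∈ ball (0 : EuclideanSpace ℝ (Fin d)) D, v x = v₀ x) ∧
          (∀ x ∉ ball (0 : EuclideanSpace ℝ (Fin d)) Dhat, v x = 0) ∧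
          -- the `C^{1+α}`-size of `v` is at most `ε`:
          (∀ x, ‖v x‖ ≤ ε) ∧
          (∀ x, ‖fderiv ℝ v x‖ ≤ ε) ∧
          HolderWith ε.toNNReal α (fun x => fderiv ℝ v x) :=
  stmt_1_general d l α hα1
end

section
/- Let λ ∈ (0,1), α > 0, K > 0 with λ·K^α < 1, and let C ≥ 0, M ≥ 0, δ ≥ 0. Let (a_k)_{k∈ℕ} be a sequence of nonnegative real numbers such that a_k ≤ M for all k and a_k ≤ λ·a_{k+1} + C·(K^{k+1}·δ)^α for all k. Then a₀ ≤ (C·K^α/(1 − λ·K^α))·δ^α. (This is the inductive estimate proved in Lemma 6.1.2 ('l.bundle') of the paper, giving the α-Hölder regularity of the strong stable bundle: there the a_k are the distances d(E^{ss}_{f^k(z)}, E^{ss}_{f^k(z')}), δ = d(z,z'), K > ‖Df‖_∞ and λ is the domination constant.) -/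
/-!
Unrolling `a k ≤ λ a (k+1) + c s^k` (here `c = C K^α δ^α`, `s = K^α`) `n` times gives
`a 0 ≤ λ^n a n + c ∑_{j<n} (λ s)^j`. Since `a` is bounded above and `λ < 1`, the first term
vanishes in the limit, and the geometric series sums to `1 / (1 - λ s)`.
-/

open Filter Finset

theorem le_pow_mul_add_mul_geom_sum {lam c s : ℝ} {a : ℕ → ℝ} (hlam : 0 ≤ lam)
    (hrec : ∀ k, a k ≤ lam * a (k + 1) + c * s ^ k) (n : ℕ) :
    a 0 ≤ lam ^ n * a n + c * ∑ j ∈ range n, (lam * s) ^ j := by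
  induction n with
  | zero => simp
  | succ n ih =>
    have hstep := mul_le_mul_of_nonneg_left (hrec n) (pow_nonneg hlam n)
    calc a 0 ≤ lam ^ n * a n + c * ∑ j ∈ range n, (lam * s) ^ j := ih
      _ ≤ lam ^ n * (lam * a (n + 1) + c * s ^ n) + c * ∑ j ∈ range n, (lam * s) ^ j := by
        linarith
      _ = lam ^ (n + 1) * a (n + 1) + c * ∑ j ∈ range (n + 1), (lam * s) ^ j := by
        rw [sum_range_succ]
        ring

theorem le_div_one_sub_of_le_mul_succ_add {lam c s : ℝ} {a : ℕ → ℝ}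
    (hlam₀ : 0 ≤ lam) (hlam₁ : lam < 1) (hs : |lam * s| < 1) (ha : BddAbove (Set.range a))
    (hrec : ∀ k, a k ≤ lam * a (k + 1) + c * s ^ k) :
    a 0 ≤ c / (1 - lam * s) := by
  obtain ⟨M, hM⟩ := ha
  have hbound (n : ℕ) : a 0 ≤ lam ^ n * M + c * ∑ j ∈ range n, (lam * s) ^ j := by
    have := mul_le_mul_of_nonneg_left (hM ⟨n, rfl⟩) (pow_nonneg hlam₀ n)
    linarith [le_pow_mul_add_mul_geom_sum hlam₀ hrec n]
  have hlim : Tendsto (fun n : ℕ ↦ lam ^ n * M + c * ∑ j ∈ range n, (lam * s) ^ j) atTop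
      (nhds (0 * M + c * (1 - lam * s)⁻¹)) :=
    ((tendsto_pow_atTop_nhds_zero_of_lt_one hlam₀ hlam₁).mul_const M).add
      ((hasSum_geometric_of_abs_lt_one hs).tendsto_sum_nat.const_mul c)
  simpa [div_eq_mul_inv] using ge_of_tendsto' hlim hbound

theorem rpow_pow_succ_mul {K δ : ℝ} (hK : 0 ≤ K) (hδ : 0 ≤ δ) (α : ℝ) (k : ℕ) :
    (K ^ (k + 1) * δ) ^ α = K ^ α * δ ^ α * (K ^ α) ^ k := by
  rw [Real.mul_rpow (by positivity) hδ, ← Real.rpow_pow_comm hK, pow_succ]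
  ring

theorem stmt_11_general (lam α K C M δ : ℝ)
    (hlam : lam ∈ Set.Ioo (0 : ℝ) 1) (hK : 0 < K)
    (hsmall : lam * K ^ α < 1) (hδ : 0 ≤ δ)
    (a : ℕ → ℝ) (haM : ∀ k, a k ≤ M)
    (hrec : ∀ k, a k ≤ lam * a (k + 1) + C * (K ^ (k + 1) * δ) ^ α) :
    a 0 ≤ C * K ^ α / (1 - lam * K ^ α) * δ ^ α := by
  have hq : |lam * K ^ α| < 1 := by
    rwa [abs_of_nonneg (mul_nonneg hlam.1.le (Real.rpow_nonneg hK.le α))]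
  have hrec' (k : ℕ) : a k ≤ lam * a (k + 1) + C * K ^ α * δ ^ α * (K ^ α) ^ k := by
    simpa only [rpow_pow_succ_mul hK.le hδ, mul_assoc] using hrec k
  calc a 0 ≤ C * K ^ α * δ ^ α / (1 - lam * K ^ α) :=
        le_div_one_sub_of_le_mul_succ_add hlam.1.le hlam.2 hq
          ⟨M, Set.forall_mem_range.2 haM⟩ hrec'
    _ = C * K ^ α / (1 - lam * K ^ α) * δ ^ α := by ring

/-- The inductive estimate from Lemma `l.bundle` (Section 6.1.2) of the paper,
giving `α`-Hölder regularity of the strong stable bundle: if `0 ≤ a k ≤ M`,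
`a k ≤ λ·a (k+1) + C·(K^{k+1}·δ)^α` for all `k`, and `λ·K^α < 1`, then
`a 0 ≤ (C·K^α/(1 - λ·K^α))·δ^α`. -/
theorem stmt_11 (lam α K C M δ : ℝ)
    (hlam : lam ∈ Set.Ioo (0 : ℝ) 1) (hα : 0 < α) (hK : 0 < K)
    (hsmall : lam * K ^ α < 1) (hC : 0 ≤ C) (hM : 0 ≤ M) (hδ : 0 ≤ δ)
    (a : ℕ → ℝ) (ha0 : ∀ k, 0 ≤ a k) (haM : ∀ k, a k ≤ M)
    (hrec : ∀ k, a k ≤ lam * a (k + 1) + C * (K ^ (k + 1) * δ) ^ α) :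
    a 0 ≤ C * K ^ α / (1 - lam * K ^ α) * δ ^ α :=
  stmt_11_general lam α K C M δ hlam hK hsmall hδ a haM hrec
end
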